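/- arXiv:1908.06353 — 2 statements merged into one kernel-verified Lean document; each statement's English description precedes it below -/
import Mathlib

section
/- Theorem 1 (simplified, no uncertainty block): consider signals generated by y[t] = ∑_{τ=0}^{t} (Φ_{yu}[τ] ⬝ u[t−τ] + Φ_{yw}[τ] ⬝ w[t−τ]) and u[t] = π(y[t]), where Φ_{yu}, Φ_{yw} are entrywise-summable matrix sequences, the disturbance satisfies |w[t]| ≤ w̄ componentwise for all t, and π : ℝ^p → ℝ^m satisfies: |y| ≤ ȳ → |π(y)| ≤ ū. If abs(Φ_{yw}) ⬝ w̄ + abs(Φ_{yu}) ⬝ ū ≤ ȳ componentwise (where abs(Φ) = ∑_t |Φ[t]|), then |y[t]| ≤ ȳ and |u[t]| ≤ ū for all t ≥ 0. -/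
/-!
Strong induction on time. Since `Φyu 0 = 0`, the output `y t` depends on past inputs only, and
these satisfy `|u s| ≤ ū` by induction. Bounding the convolution termwise by the entrywise
absolute kernels and the finite sums of kernels by their series gives
`|y t| ≤ abs(Φyw) w̄ + abs(Φyu) ū ≤ ȳ`, and then `|u t| = |π (y t)| ≤ ū`.
-/

open Finset Matrix

namespace Matrix

variable {m n : Type*} [Fintype n]

/-- The paper's `abs(Φ)`. -/
noncomputable def absSum (Φ : ℕ → Matrix m n ℝ) : Matrix m n ℝ :=
  fun i j => ∑' t, |Φ t i j|

lemma abs_mulVec_le_mulVec_map_abs (A : Matrix m n ℝ) {v vbar : n → ℝ}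
    (hv : ∀ j, |v j| ≤ vbar j) (i : m) :
    |(A *ᵥ v) i| ≤ (A.map abs *ᵥ vbar) i :=
  calc |∑ j, A i j * v j|
      ≤ ∑ j, |A i j * v j| := abs_sum_le_sum_abs _ _
    _ ≤ ∑ j, |A i j| * vbar j := by
        gcongr with j
        rw [abs_mul]
        exact mul_le_mul_of_nonneg_left (hv j) (abs_nonneg _)

lemma sum_mulVec_map_abs_le_absSum_mulVec {Φ : ℕ → Matrix m n ℝ}
    (hΦ : ∀ i j, Summable fun t => |Φ t i j|) {vbar : n → ℝ} (hvbar : 0 ≤ vbar)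
    (s : Finset ℕ) (i : m) :
    ∑ τ ∈ s, ((Φ τ).map abs *ᵥ vbar) i ≤ (absSum Φ *ᵥ vbar) i := by
  rw [← Finset.sum_apply, ← sum_mulVec]
  refine dotProduct_le_dotProduct_of_nonneg_right (fun j => ?_) hvbar
  simp only [Matrix.sum_apply, map_apply, absSum]
  exact (hΦ i j).sum_le_tsum s fun _ _ => abs_nonneg _

lemma abs_convolution_le {Φ : ℕ → Matrix m n ℝ} (hΦ : ∀ i j, Summable fun t => |Φ t i j|)
    {v : ℕ → n → ℝ} {vbar : n → ℝ} (hvbar : 0 ≤ vbar) (t : ℕ)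
    (hv : ∀ τ ≤ t, Φ τ ≠ 0 → ∀ j, |v (t - τ) j| ≤ vbar j) (i : m) :
    |∑ τ ∈ range (t + 1), (Φ τ *ᵥ v (t - τ)) i| ≤ (absSum Φ *ᵥ vbar) i := by
  refine (abs_sum_le_sum_abs _ _).trans
    (le_trans (sum_le_sum fun τ hτ => ?_) (sum_mulVec_map_abs_le_absSum_mulVec hΦ hvbar _ i))
  by_cases hΦτ : Φ τ = 0
  · simp [hΦτ]
  · exact abs_mulVec_le_mulVec_map_abs _ (hv τ (Nat.lt_succ_iff.mp (mem_range.mp hτ)) hΦτ) i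

end Matrix

theorem stmt_5_general {p q pw : ℕ}
    (Φyu : ℕ → Matrix (Fin p) (Fin q) ℝ) (Φyw : ℕ → Matrix (Fin p) (Fin pw) ℝ)
    (hΦyu : ∀ i j, Summable fun t => |Φyu t i j|)
    (hΦyw : ∀ i j, Summable fun t => |Φyw t i j|)
    (hwellposed : Φyu 0 = 0)
    (π : (Fin p → ℝ) → (Fin q → ℝ))
    (w : ℕ → Fin pw → ℝ) (y : ℕ → Fin p → ℝ) (u : ℕ → Fin q → ℝ)
    (wbar : Fin pw → ℝ) (ybar : Fin p → ℝ) (ubar : Fin q → ℝ)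
    (hwbar : ∀ i, 0 ≤ wbar i) (hubar : ∀ k, 0 ≤ ubar k)
    (hw : ∀ t i, |w t i| ≤ wbar i)
    (hy : ∀ t, y t = ∑ τ ∈ Finset.range (t + 1),
      ((Φyu τ).mulVec (u (t - τ)) + (Φyw τ).mulVec (w (t - τ))))
    (hu : ∀ t, u t = π (y t))
    (hπ : ∀ v : Fin p → ℝ, (∀ i, |v i| ≤ ybar i) → ∀ k, |π v k| ≤ ubar k)
    (hfeedback : ∀ i,
      Matrix.mulVec (fun i j => ∑' t, |Φyw t i j|) wbar i +
      Matrix.mulVec (fun i j => ∑' t, |Φyu t i j|) ubar i ≤ ybar i) :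
    ∀ t, (∀ i, |y t i| ≤ ybar i) ∧ (∀ k, |u t k| ≤ ubar k) := by
  intro t
  induction t using Nat.strong_induction_on with
  | _ t ih =>
    have hyt : ∀ i, |y t i| ≤ ybar i := by
      intro i
      have hu_past : ∀ τ ≤ t, Φyu τ ≠ 0 → ∀ k, |u (t - τ) k| ≤ ubar k := fun τ hτt hτ =>
        (ih (t - τ) (by have : τ ≠ 0 := fun h0 => hτ (h0 ▸ hwellposed); omega)).2
      have hyu := abs_convolution_le hΦyu hubar t hu_past i
      have hyw := abs_convolution_le hΦyw hwbar t (fun τ _ _ => hw (t - τ)) i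
      have hgain : (absSum Φyw *ᵥ wbar) i + (absSum Φyu *ᵥ ubar) i ≤ ybar i := hfeedback i
      rw [hy t, Finset.sum_apply]
      simp only [Pi.add_apply, sum_add_distrib]
      linarith [abs_add_le (∑ τ ∈ range (t + 1), (Φyu τ *ᵥ u (t - τ)) i)
        (∑ τ ∈ range (t + 1), (Φyw τ *ᵥ w (t - τ)) i)]
    exact ⟨hyt, hu t ▸ hπ _ hyt⟩

/-- Theorem 1 of the paper, simplified (no uncertainty block): the set
`{(y,u) : |y| ≤ ȳ, |u| ≤ ū}` is invariant for the closed loop. -/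
theorem stmt_5 {p q pw : ℕ}
    (Φyu : ℕ → Matrix (Fin p) (Fin q) ℝ) (Φyw : ℕ → Matrix (Fin p) (Fin pw) ℝ)
    (hΦyu : ∀ i j, Summable fun t => |Φyu t i j|)
    (hΦyw : ∀ i j, Summable fun t => |Φyw t i j|)
    (hwellposed : Φyu 0 = 0)
    (π : (Fin p → ℝ) → (Fin q → ℝ))
    (w : ℕ → Fin pw → ℝ) (y : ℕ → Fin p → ℝ) (u : ℕ → Fin q → ℝ)
    (wbar : Fin pw → ℝ) (ybar : Fin p → ℝ) (ubar : Fin q → ℝ)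
    (hwbar : ∀ i, 0 ≤ wbar i) (hybar : ∀ i, 0 ≤ ybar i) (hubar : ∀ k, 0 ≤ ubar k)
    (hw : ∀ t i, |w t i| ≤ wbar i)
    (hy : ∀ t, y t = ∑ τ ∈ Finset.range (t + 1),
      ((Φyu τ).mulVec (u (t - τ)) + (Φyw τ).mulVec (w (t - τ))))
    (hu : ∀ t, u t = π (y t))
    (hπ : ∀ v : Fin p → ℝ, (∀ i, |v i| ≤ ybar i) → ∀ k, |π v k| ≤ ubar k)
    (hfeedback : ∀ i,
      Matrix.mulVec (fun i j => ∑' t, |Φyw t i j|) wbar i +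
      Matrix.mulVec (fun i j => ∑' t, |Φyu t i j|) ubar i ≤ ybar i) :
    ∀ t, (∀ i, |y t i| ≤ ybar i) ∧ (∀ k, |u t k| ≤ ubar k) :=
  stmt_5_general Φyu Φyw hΦyu hΦyw hwellposed π w y u wbar ybar ubar hwbar hubar hw hy hu hπ
    hfeedback
end

section
/- Theorem 1 (full version with uncertainty): under the setup of the paper, suppose (1) |y| ≤ ȳ → |π(y)| ≤ ū; (2) the uncertainty map satisfies: if |α[k]| ≤ ᾱ for k = 0,...,t then |δ[t]| ≤ δ̄; (3) abs(Φ_{yw})w̄ + abs(Φ_{yu})ū + abs(Φ_{yδ})δ̄ ≤ ȳ and abs(Φ_{αw})w̄ + abs(Φ_{αu})ū + abs(Φ_{αδ})δ̄ ≤ ᾱ. Then for all t ≥ 0: |y[t]| ≤ ȳ, |u[t]| ≤ ū, |α[t]| ≤ ᾱ, |δ[t]| ≤ δ̄, and moreover |x[t]| ≤ abs(Φ_{xw})w̄ + abs(Φ_{xu})ū + abs(Φ_{xδ})δ̄. -/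
lemma conv_bound {m n : ℕ} (A : ℕ → Matrix (Fin m) (Fin n) ℝ)
    (hA : ∀ i j, Summable fun t => |A t i j|)
    (v : ℕ → Fin n → ℝ) (vbar : Fin n → ℝ) (hvb : ∀ j, 0 ≤ vbar j) (t : ℕ)
    (hv : ∀ τ, τ ≤ t → ∀ i j, |A τ i j| * |v (t - τ) j| ≤ |A τ i j| * vbar j)
    (i : Fin m) :
    |∑ τ ∈ Finset.range (t+1), (A τ).mulVec (v (t - τ)) i| ≤
      Matrix.mulVec (fun i j => ∑' s, |A s i j|) vbar i := by
  have key : |∑ τ ∈ Finset.range (t+1), (A τ).mulVec (v (t-τ)) i| ≤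
      ∑ τ ∈ Finset.range (t+1), ∑ j, |A τ i j| * vbar j := by
    refine le_trans (Finset.abs_sum_le_sum_abs _ _) (Finset.sum_le_sum ?_)
    intro τ hτ
    simp only [Matrix.mulVec, dotProduct]
    refine le_trans (Finset.abs_sum_le_sum_abs _ _) (Finset.sum_le_sum ?_)
    intro j _
    rw [abs_mul]
    exact hv τ (Nat.lt_succ_iff.mp (Finset.mem_range.mp hτ)) i j
  refine le_trans key ?_
  rw [Finset.sum_comm]
  simp only [Matrix.mulVec, dotProduct, ← Finset.sum_mul]
  refine Finset.sum_le_sum fun j _ => ?_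
  exact mul_le_mul_of_nonneg_right (Summable.sum_le_tsum _ (fun _ _ => abs_nonneg _) (hA i j)) (hvb j)

/-- Theorem 1 of the paper (full version with uncertainty block): bounded feedback
signals and bounded state under persistent componentwise-bounded perturbation. -/
theorem stmt_6 {nx ny nu na nd nw : ℕ}
    (Φxu : ℕ → Matrix (Fin nx) (Fin nu) ℝ) (Φxw : ℕ → Matrix (Fin nx) (Fin nw) ℝ)
    (Φxd : ℕ → Matrix (Fin nx) (Fin nd) ℝ)
    (Φyu : ℕ → Matrix (Fin ny) (Fin nu) ℝ) (Φyw : ℕ → Matrix (Fin ny) (Fin nw) ℝ)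
    (Φyd : ℕ → Matrix (Fin ny) (Fin nd) ℝ)
    (Φau : ℕ → Matrix (Fin na) (Fin nu) ℝ) (Φaw : ℕ → Matrix (Fin na) (Fin nw) ℝ)
    (Φad : ℕ → Matrix (Fin na) (Fin nd) ℝ)
    (hΦxu : ∀ i j, Summable fun t => |Φxu t i j|)
    (hΦxw : ∀ i j, Summable fun t => |Φxw t i j|)
    (hΦxd : ∀ i j, Summable fun t => |Φxd t i j|)
    (hΦyu : ∀ i j, Summable fun t => |Φyu t i j|)
    (hΦyw : ∀ i j, Summable fun t => |Φyw t i j|)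
    (hΦyd : ∀ i j, Summable fun t => |Φyd t i j|)
    (hΦau : ∀ i j, Summable fun t => |Φau t i j|)
    (hΦaw : ∀ i j, Summable fun t => |Φaw t i j|)
    (hΦad : ∀ i j, Summable fun t => |Φad t i j|)
    -- well-posedness: no direct feedthrough in the loop
    (hwp1 : Φyu 0 = 0) (hwp2 : Φyd 0 = 0) (hwp3 : Φad 0 = 0)
    (π : (Fin ny → ℝ) → (Fin nu → ℝ))
    (x : ℕ → Fin nx → ℝ) (y : ℕ → Fin ny → ℝ) (u : ℕ → Fin nu → ℝ)
    (α : ℕ → Fin na → ℝ) (δ : ℕ → Fin nd → ℝ) (w : ℕ → Fin nw → ℝ)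
    (wbar : Fin nw → ℝ) (ybar : Fin ny → ℝ) (ubar : Fin nu → ℝ)
    (αbar : Fin na → ℝ) (δbar : Fin nd → ℝ)
    (hwbar : ∀ i, 0 ≤ wbar i) (hybar : ∀ i, 0 ≤ ybar i) (hubar : ∀ i, 0 ≤ ubar i)
    (hαbar : ∀ i, 0 ≤ αbar i) (hδbar : ∀ i, 0 ≤ δbar i)
    (hw : ∀ t i, |w t i| ≤ wbar i)
    (hx : ∀ t, x t = ∑ τ ∈ Finset.range (t + 1),
      ((Φxu τ).mulVec (u (t - τ)) + (Φxw τ).mulVec (w (t - τ)) + (Φxd τ).mulVec (δ (t - τ))))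
    (hy : ∀ t, y t = ∑ τ ∈ Finset.range (t + 1),
      ((Φyu τ).mulVec (u (t - τ)) + (Φyw τ).mulVec (w (t - τ)) + (Φyd τ).mulVec (δ (t - τ))))
    (hα : ∀ t, α t = ∑ τ ∈ Finset.range (t + 1),
      ((Φau τ).mulVec (u (t - τ)) + (Φaw τ).mulVec (w (t - τ)) + (Φad τ).mulVec (δ (t - τ))))
    (hu : ∀ t, u t = π (y t))
    -- condition 1: NN robustness certificate
    (hπ : ∀ v : Fin ny → ℝ, (∀ i, |v i| ≤ ybar i) → ∀ k, |π v k| ≤ ubar k)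
    -- condition 2: causal input-output relation of the uncertainty block
    (hΔ : ∀ t, (∀ k ≤ t, ∀ i, |α k i| ≤ αbar i) → ∀ i, |δ t i| ≤ δbar i)
    -- condition 3: feedback conditions
    (hfb1 : ∀ i,
      Matrix.mulVec (fun i j => ∑' t, |Φyw t i j|) wbar i +
      Matrix.mulVec (fun i j => ∑' t, |Φyu t i j|) ubar i +
      Matrix.mulVec (fun i j => ∑' t, |Φyd t i j|) δbar i ≤ ybar i)
    (hfb2 : ∀ i,
      Matrix.mulVec (fun i j => ∑' t, |Φaw t i j|) wbar i +
      Matrix.mulVec (fun i j => ∑' t, |Φau t i j|) ubar i +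
      Matrix.mulVec (fun i j => ∑' t, |Φad t i j|) δbar i ≤ αbar i) :
    ∀ t, (∀ i, |y t i| ≤ ybar i) ∧ (∀ i, |u t i| ≤ ubar i) ∧
      (∀ i, |α t i| ≤ αbar i) ∧ (∀ i, |δ t i| ≤ δbar i) ∧
      (∀ i, |x t i| ≤
        Matrix.mulVec (fun i j => ∑' t', |Φxw t' i j|) wbar i +
        Matrix.mulVec (fun i j => ∑' t', |Φxu t' i j|) ubar i +
        Matrix.mulVec (fun i j => ∑' t', |Φxd t' i j|) δbar i) := by
  
  intro t
  induction t using Nat.strong_induction_on with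
  | _ t IH =>
  -- bounds at strictly earlier times
  have hult : ∀ τ, 1 ≤ τ → τ ≤ t → ∀ j, |u (t - τ) j| ≤ ubar j :=
    fun τ h1 ht' j => (IH (t - τ) (Nat.sub_lt (h1.trans ht') h1)).2.1 j
  have hδlt : ∀ τ, 1 ≤ τ → τ ≤ t → ∀ j, |δ (t - τ) j| ≤ δbar j :=
    fun τ h1 ht' j => (IH (t - τ) (Nat.sub_lt (h1.trans ht') h1)).2.2.2.1 j
  -- y bound
  have hyb : ∀ i, |y t i| ≤ ybar i := by
    intro i
    have hsplit : y t = (∑ τ ∈ Finset.range (t+1), (Φyu τ).mulVec (u (t-τ))) +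
        (∑ τ ∈ Finset.range (t+1), (Φyw τ).mulVec (w (t-τ))) +
        (∑ τ ∈ Finset.range (t+1), (Φyd τ).mulVec (δ (t-τ))) := by
      rw [hy t, Finset.sum_add_distrib, Finset.sum_add_distrib]
    have b1 := conv_bound Φyu hΦyu u ubar hubar t (by
      intro τ hτ i j
      rcases Nat.eq_zero_or_pos τ with rfl | h1
      · simp [hwp1]
      · exact mul_le_mul_of_nonneg_left (hult τ h1 hτ j) (abs_nonneg _)) i
    have b2 := conv_bound Φyw hΦyw w wbar hwbar t
      (fun τ _ i j => mul_le_mul_of_nonneg_left (hw _ j) (abs_nonneg _)) i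
    have b3 := conv_bound Φyd hΦyd δ δbar hδbar t (by
      intro τ hτ i j
      rcases Nat.eq_zero_or_pos τ with rfl | h1
      · simp [hwp2]
      · exact mul_le_mul_of_nonneg_left (hδlt τ h1 hτ j) (abs_nonneg _)) i
    calc |y t i| ≤ |(∑ τ ∈ Finset.range (t+1), (Φyu τ).mulVec (u (t-τ))) i| +
          |(∑ τ ∈ Finset.range (t+1), (Φyw τ).mulVec (w (t-τ))) i| +
          |(∑ τ ∈ Finset.range (t+1), (Φyd τ).mulVec (δ (t-τ))) i| := by
            rw [hsplit]; exact (abs_add_le _ _).trans (add_le_add_left (abs_add_le _ _) _)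
      _ ≤ Matrix.mulVec (fun i j => ∑' s, |Φyu s i j|) ubar i +
          Matrix.mulVec (fun i j => ∑' s, |Φyw s i j|) wbar i +
          Matrix.mulVec (fun i j => ∑' s, |Φyd s i j|) δbar i := by
          simpa only [Finset.sum_apply] using add_le_add (add_le_add b1 b2) b3
      _ ≤ ybar i := by linarith [hfb1 i]
  -- u bound
  have hub : ∀ i, |u t i| ≤ ubar i := by
    intro i; rw [hu t]; exact hπ _ hyb i
  have hule : ∀ τ, τ ≤ t → ∀ j, |u (t - τ) j| ≤ ubar j := by
    intro τ hτ j
    rcases Nat.eq_zero_or_pos τ with rfl | h1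
    · simpa using hub j
    · exact hult τ h1 hτ j
  -- α bound
  have hαb : ∀ i, |α t i| ≤ αbar i := by
    intro i
    have hsplit : α t = (∑ τ ∈ Finset.range (t+1), (Φau τ).mulVec (u (t-τ))) +
        (∑ τ ∈ Finset.range (t+1), (Φaw τ).mulVec (w (t-τ))) +
        (∑ τ ∈ Finset.range (t+1), (Φad τ).mulVec (δ (t-τ))) := by
      rw [hα t, Finset.sum_add_distrib, Finset.sum_add_distrib]
    have b1 := conv_bound Φau hΦau u ubar hubar t
      (fun τ hτ i j => mul_le_mul_of_nonneg_left (hule τ hτ j) (abs_nonneg _)) i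
    have b2 := conv_bound Φaw hΦaw w wbar hwbar t
      (fun τ _ i j => mul_le_mul_of_nonneg_left (hw _ j) (abs_nonneg _)) i
    have b3 := conv_bound Φad hΦad δ δbar hδbar t (by
      intro τ hτ i j
      rcases Nat.eq_zero_or_pos τ with rfl | h1
      · simp [hwp3]
      · exact mul_le_mul_of_nonneg_left (hδlt τ h1 hτ j) (abs_nonneg _)) i
    calc |α t i| ≤ |(∑ τ ∈ Finset.range (t+1), (Φau τ).mulVec (u (t-τ))) i| +
          |(∑ τ ∈ Finset.range (t+1), (Φaw τ).mulVec (w (t-τ))) i| +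
          |(∑ τ ∈ Finset.range (t+1), (Φad τ).mulVec (δ (t-τ))) i| := by
            rw [hsplit]; exact (abs_add_le _ _).trans (add_le_add_left (abs_add_le _ _) _)
      _ ≤ Matrix.mulVec (fun i j => ∑' s, |Φau s i j|) ubar i +
          Matrix.mulVec (fun i j => ∑' s, |Φaw s i j|) wbar i +
          Matrix.mulVec (fun i j => ∑' s, |Φad s i j|) δbar i := by
          simpa only [Finset.sum_apply] using add_le_add (add_le_add b1 b2) b3
      _ ≤ αbar i := by linarith [hfb2 i]
  -- δ bound
  have hδb : ∀ i, |δ t i| ≤ δbar i := by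
    refine hΔ t ?_
    intro k hk i
    rcases eq_or_lt_of_le hk with rfl | h
    · exact hαb i
    · exact (IH k h).2.2.1 i
  have hδle : ∀ τ, τ ≤ t → ∀ j, |δ (t - τ) j| ≤ δbar j := by
    intro τ hτ j
    rcases Nat.eq_zero_or_pos τ with rfl | h1
    · simpa using hδb j
    · exact hδlt τ h1 hτ j
  -- x bound
  refine ⟨hyb, hub, hαb, hδb, ?_⟩
  intro i
  have hsplit : x t = (∑ τ ∈ Finset.range (t+1), (Φxu τ).mulVec (u (t-τ))) +
      (∑ τ ∈ Finset.range (t+1), (Φxw τ).mulVec (w (t-τ))) +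
      (∑ τ ∈ Finset.range (t+1), (Φxd τ).mulVec (δ (t-τ))) := by
    rw [hx t, Finset.sum_add_distrib, Finset.sum_add_distrib]
  have b1 := conv_bound Φxu hΦxu u ubar hubar t
    (fun τ hτ i j => mul_le_mul_of_nonneg_left (hule τ hτ j) (abs_nonneg _)) i
  have b2 := conv_bound Φxw hΦxw w wbar hwbar t
    (fun τ _ i j => mul_le_mul_of_nonneg_left (hw _ j) (abs_nonneg _)) i
  have b3 := conv_bound Φxd hΦxd δ δbar hδbar t
    (fun τ hτ i j => mul_le_mul_of_nonneg_left (hδle τ hτ j) (abs_nonneg _)) i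
  calc |x t i| ≤ |(∑ τ ∈ Finset.range (t+1), (Φxu τ).mulVec (u (t-τ))) i| +
        |(∑ τ ∈ Finset.range (t+1), (Φxw τ).mulVec (w (t-τ))) i| +
        |(∑ τ ∈ Finset.range (t+1), (Φxd τ).mulVec (δ (t-τ))) i| := by
          rw [hsplit]; exact (abs_add_le _ _).trans (add_le_add_left (abs_add_le _ _) _)
    _ ≤ Matrix.mulVec (fun i j => ∑' s, |Φxu s i j|) ubar i +
        Matrix.mulVec (fun i j => ∑' s, |Φxw s i j|) wbar i +
        Matrix.mulVec (fun i j => ∑' s, |Φxd s i j|) δbar i := by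
          simpa only [Finset.sum_apply] using add_le_add (add_le_add b1 b2) b3
    _ ≤ _ := by linarith
end
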